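/- arXiv:2501.14232 — 5 statements merged into one kernel-verified Lean document; each statement's English description precedes it below -/
import Mathlib

section
/- Let U be a real Hilbert space, α > 0, and let R : U → ℝ be α-strongly convex on U with a global minimizer u* satisfying R(u*) ≥ 0. Let λ > 0, η ≥ 1, and ρ ∈ (0,1]. Suppose u† ∈ U satisfies R(u†) ≤ η·R(u*) and the linearly combined point ρ·ũ + (1−ρ)·u† satisfies R(ρ·ũ + (1−ρ)·u†) ≤ (1+λ)·η·R(u*). Then ‖ũ − u*‖ ≤ (1/ρ)·√(2/α)·((1−ρ)·√(η−1) + √((1+λ)·η − 1))·√(R(u*)). (This is the quantitative content of Proposition 4.1: a linear combination of an ML action and a control prior with fixed weight ρ > 0 can only be (1+λ)-safe against an η-competitive prior if the ML action's normalized distance to the optimum, ‖ũ − u*‖²/R(u*), is bounded by a finite constant depending only on ρ, λ, η, α.) -/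
/-- Proposition 4.1, quantitative content.
If `R` is `α`-strongly convex on a real Hilbert space with global minimizer `u*`,
`R u* ≥ 0`, the prior `u†` is `η`-competitive, and the linear combination
`ρ • ũ + (1−ρ) • u†` is `(1+λ)`-safe against the `η`-competitive prior, then the
distance from the ML action `ũ` to the optimum is bounded. -/
theorem stmt0 {U : Type*} [NormedAddCommGroup U] [InnerProductSpace ℝ U]
    (R : U → ℝ) (α lam η ρ : ℝ) (ustar utilde udag : U)
    (hα : 0 < α)
    (hsc : ∀ x y : U, ∀ t : ℝ, t ∈ Set.Icc (0 : ℝ) 1 →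
      R (t • x + (1 - t) • y) ≤
        t * R x + (1 - t) * R y - (α / 2) * t * (1 - t) * ‖x - y‖ ^ 2)
    (hmin : ∀ v : U, R ustar ≤ R v)
    (hR0 : 0 ≤ R ustar)
    (hlam : 0 < lam) (hη : 1 ≤ η) (hρ0 : 0 < ρ) (hρ1 : ρ ≤ 1)
    (hdag : R udag ≤ η * R ustar)
    (hcomb : R (ρ • utilde + (1 - ρ) • udag) ≤ (1 + lam) * η * R ustar) :
    ‖utilde - ustar‖ ≤ (1 / ρ) * Real.sqrt (2 / α) *
      ((1 - ρ) * Real.sqrt (η - 1) + Real.sqrt ((1 + lam) * η - 1)) *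
      Real.sqrt (R ustar) := by
  -- Quadratic growth from strong convexity
  have quad : ∀ v : U, (α / 2) * ‖v - ustar‖ ^ 2 ≤ R v - R ustar := by
    intro v
    have key : ∀ t ∈ Set.Ioo (0 : ℝ) 1,
        (α / 2) * (1 - t) * ‖v - ustar‖ ^ 2 ≤ R v - R ustar := by
      intro t ht
      have h1 := hsc v ustar t ⟨le_of_lt ht.1, le_of_lt ht.2⟩
      have h2 := hmin (t • v + (1 - t) • ustar)
      nlinarith [ht.1, ht.2]
    have hev : ∀ᶠ t in nhdsWithin (0 : ℝ) (Set.Ioi 0),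
        (α / 2) * (1 - t) * ‖v - ustar‖ ^ 2 ≤ R v - R ustar := by
      filter_upwards [Ioo_mem_nhdsGT_of_mem (by norm_num : (0:ℝ) ∈ Set.Ico (0:ℝ) 1)]
        with t ht using key t ht
    have htend : Filter.Tendsto (fun t : ℝ => (α / 2) * (1 - t) * ‖v - ustar‖ ^ 2)
        (nhdsWithin (0 : ℝ) (Set.Ioi 0)) (nhds ((α / 2) * ‖v - ustar‖ ^ 2)) := by
      have : Filter.Tendsto (fun t : ℝ => (α / 2) * (1 - t) * ‖v - ustar‖ ^ 2)
          (nhds 0) (nhds ((α / 2) * (1 - 0) * ‖v - ustar‖ ^ 2)) := by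
        apply Filter.Tendsto.mul_const
        exact (Filter.Tendsto.const_mul _ (tendsto_const_nhds.sub Filter.tendsto_id))
      simpa using this.mono_left nhdsWithin_le_nhds
    exact le_of_tendsto htend hev
  set A := ‖udag - ustar‖ with hA
  set w := ρ • utilde + (1 - ρ) • udag with hw
  set B := ‖w - ustar‖ with hB
  have hαpos : (0:ℝ) < 2 / α := by positivity
  have hη1 : (0:ℝ) ≤ η - 1 := by linarith
  have hη2 : (0:ℝ) ≤ (1 + lam) * η - 1 := by nlinarith
  have hAle : A ≤ Real.sqrt (2 / α) * Real.sqrt (η - 1) * Real.sqrt (R ustar) := by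
    have h1 := quad udag
    have h2 : A ^ 2 ≤ (2 / α) * ((η - 1) * R ustar) := by
      rw [div_mul_eq_mul_div, le_div_iff₀ hα]
      nlinarith
    calc A = Real.sqrt (A ^ 2) := by rw [Real.sqrt_sq (norm_nonneg _)]
    _ ≤ Real.sqrt ((2 / α) * ((η - 1) * R ustar)) := Real.sqrt_le_sqrt h2
    _ = _ := by rw [Real.sqrt_mul hαpos.le, Real.sqrt_mul hη1, mul_assoc]
  have hBle : B ≤ Real.sqrt (2 / α) * Real.sqrt ((1 + lam) * η - 1) * Real.sqrt (R ustar) := by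
    have h1 := quad w
    have h2 : B ^ 2 ≤ (2 / α) * (((1 + lam) * η - 1) * R ustar) := by
      rw [div_mul_eq_mul_div, le_div_iff₀ hα]
      nlinarith
    calc B = Real.sqrt (B ^ 2) := by rw [Real.sqrt_sq (norm_nonneg _)]
    _ ≤ Real.sqrt ((2 / α) * (((1 + lam) * η - 1) * R ustar)) := Real.sqrt_le_sqrt h2
    _ = _ := by rw [Real.sqrt_mul hαpos.le, Real.sqrt_mul hη2, mul_assoc]
  have hdecomp : ρ • (utilde - ustar) = (w - ustar) - (1 - ρ) • (udag - ustar) := by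
    rw [hw]
    simp only [smul_sub]
    abel_nf
    simp [sub_smul, smul_smul]
    module
  have hnorm : ρ * ‖utilde - ustar‖ ≤ B + (1 - ρ) * A := by
    have := norm_sub_le (w - ustar) ((1 - ρ) • (udag - ustar))
    rw [← hdecomp] at this
    rw [norm_smul, norm_smul] at this
    rw [Real.norm_of_nonneg hρ0.le] at this
    rw [Real.norm_of_nonneg (by linarith : (0:ℝ) ≤ 1 - ρ)] at this
    exact this
  have : ‖utilde - ustar‖ ≤ (1 / ρ) * (B + (1 - ρ) * A) := by
    rw [one_div, ← div_eq_inv_mul, le_div_iff₀ hρ0]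
    linarith [hnorm]
  refine this.trans ?_
  have h1ρ : (0:ℝ) ≤ 1 - ρ := by linarith
  have : B + (1 - ρ) * A ≤ Real.sqrt (2 / α) *
      ((1 - ρ) * Real.sqrt (η - 1) + Real.sqrt ((1 + lam) * η - 1)) * Real.sqrt (R ustar) := by
    have hA' : (1 - ρ) * A ≤ (1 - ρ) * (Real.sqrt (2 / α) * Real.sqrt (η - 1) * Real.sqrt (R ustar)) :=
      mul_le_mul_of_nonneg_left hAle h1ρ
    nlinarith [hBle]
  calc (1 / ρ) * (B + (1 - ρ) * A)
      ≤ (1 / ρ) * (Real.sqrt (2 / α) *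
        ((1 - ρ) * Real.sqrt (η - 1) + Real.sqrt ((1 + lam) * η - 1)) * Real.sqrt (R ustar)) :=
        mul_le_mul_of_nonneg_left this (by positivity)
    _ = _ := by ring
end

section
/- Let E and F be real Hilbert spaces and equip E × F with the ℓ² product inner product, so ‖(x,u)‖² = ‖x‖² + ‖u‖². Let β > 0 and let r : E × F → ℝ be nonnegative, convex, and β-smooth. Let f : E × F → E satisfy ‖f(x,u) − f(x',u)‖ ≤ σₓ·‖x − x'‖ for all x, x' ∈ E and u ∈ F, where σₓ ≥ 0. Let λ > 0 and let q, q' ≥ 0 satisfy σₓ²·q' + (1 + 1/λ)·(β/2) ≤ q. Suppose real numbers R, R† and points x, x† ∈ E, u† ∈ F satisfy the invariant R + q·‖x − x†‖² ≤ (1+λ)·R†. Then R + r(x, u†) + q'·‖f(x, u†) − f(x†, u†)‖² ≤ (1+λ)·(R† + r(x†, u†)). (This is the induction step of Proposition 4.2: the prior action u† remains feasible for the reservation-augmented safe set at the next round.) -/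
/-!
Smoothness gives the descent inequality `r z ≤ r w + ⟪∇r w, z - w⟫ + β/2 ‖z - w‖²`; applied at
`z = w - β⁻¹ ∇r w`, nonnegativity of `r` turns it into `‖∇r w‖² ≤ 2β r w`. Bounding the inner
product by Young's inequality with weight `λ` then gives
`r z ≤ (1 + λ) r w + (1 + 1/λ) β/2 ‖z - w‖²`. With `z = (x, u†)` and `w = (x†, u†)` we have
`‖z - w‖ = ‖x - x†‖`, and the condition on `q` lets `q ‖x - x†‖²` in the invariant absorb both
this quadratic term and the Lipschitz bound on `q' ‖f(x, u†) - f(x†, u†)‖²`.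
-/

open InnerProductSpace

section Smooth

variable {H : Type*} [NormedAddCommGroup H] [InnerProductSpace ℝ H] [CompleteSpace H]
  {r : H → ℝ} {g : H → H} {β : ℝ}

theorem le_add_inner_add_half_mul_sq_norm_sub (hgrad : ∀ z, HasGradientAt r (g z) z)
    (hglip : ∀ z w, ‖g z - g w‖ ≤ β * ‖z - w‖) (z w : H) :
    r z ≤ r w + ⟪g w, z - w⟫_ℝ + β / 2 * ‖z - w‖ ^ 2 := by
  set d := z - w
  let φ : ℝ → ℝ := fun t ↦ r (w + t • d) - t * ⟪g w, d⟫_ℝ - β / 2 * t ^ 2 * ‖d‖ ^ 2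
  have hφ : ∀ t, HasDerivAt φ (⟪g (w + t • d) - g w, d⟫_ℝ - β * t * ‖d‖ ^ 2) t := by
    intro t
    have hline : HasDerivAt (fun s : ℝ ↦ w + s • d) d t := by
      simpa using ((hasDerivAt_id t).smul_const d).const_add w
    have hr := (hgrad (w + t • d)).hasFDerivAt.comp_hasDerivAt t hline
    change HasDerivAt _ ⟪g (w + t • d), d⟫_ℝ t at hr
    refine ((hr.sub ((hasDerivAt_id t).mul_const ⟪g w, d⟫_ℝ)).sub
      (((hasDerivAt_pow 2 t).const_mul (β / 2)).mul_const (‖d‖ ^ 2))).congr_deriv ?_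
    rw [inner_sub_left]
    push_cast
    ring
  have hφ_nonpos : ∀ t ∈ interior (Set.Ici (0 : ℝ)),
      ⟪g (w + t • d) - g w, d⟫_ℝ - β * t * ‖d‖ ^ 2 ≤ 0 := by
    intro t ht
    rw [interior_Ici] at ht
    have hlip : ‖g (w + t • d) - g w‖ ≤ β * t * ‖d‖ := by
      simpa [norm_smul, abs_of_pos (Set.mem_Ioi.mp ht), mul_assoc] using hglip (w + t • d) w
    have := (real_inner_le_norm _ d).trans
      (mul_le_mul_of_nonneg_right hlip (norm_nonneg d))
    nlinarith
  have hanti : AntitoneOn φ (Set.Ici 0) :=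
    antitoneOn_of_hasDerivWithinAt_nonpos (convex_Ici 0)
      (fun t _ ↦ (hφ t).continuousAt.continuousWithinAt)
      (fun t _ ↦ (hφ t).hasDerivWithinAt) hφ_nonpos
  have h10 : φ 1 ≤ φ 0 := hanti Set.self_mem_Ici (by norm_num) zero_le_one
  simp only [φ, one_smul, zero_smul, add_zero, d, add_sub_cancel] at h10
  linarith

theorem sq_norm_le_two_mul_mul_of_nonneg (hβ : 0 < β) (hr0 : ∀ z, 0 ≤ r z)
    (hgrad : ∀ z, HasGradientAt r (g z) z)
    (hglip : ∀ z w, ‖g z - g w‖ ≤ β * ‖z - w‖) (w : H) :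
    ‖g w‖ ^ 2 ≤ 2 * β * r w := by
  have h := le_add_inner_add_half_mul_sq_norm_sub hgrad hglip (w - β⁻¹ • g w) w
  have hv := hr0 (w - β⁻¹ • g w)
  rw [sub_sub_cancel_left, inner_neg_right, real_inner_smul_right, real_inner_self_eq_norm_sq,
    norm_neg, norm_smul, mul_pow, Real.norm_eq_abs, sq_abs] at h
  have hstep : β / 2 * (β⁻¹ ^ 2 * ‖g w‖ ^ 2) = β⁻¹ / 2 * ‖g w‖ ^ 2 := by
    field_simp
  have hdesc : β⁻¹ * ‖g w‖ ^ 2 ≤ 2 * r w := by linarith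
  calc ‖g w‖ ^ 2 = β * (β⁻¹ * ‖g w‖ ^ 2) := by field_simp
    _ ≤ β * (2 * r w) := by gcongr
    _ = 2 * β * r w := by ring

theorem le_one_add_mul_add_mul_sq_norm_sub {lam : ℝ} (hβ : 0 < β) (hlam : 0 < lam)
    (hr0 : ∀ z, 0 ≤ r z) (hgrad : ∀ z, HasGradientAt r (g z) z)
    (hglip : ∀ z w, ‖g z - g w‖ ≤ β * ‖z - w‖) (z w : H) :
    r z ≤ (1 + lam) * r w + (1 + 1 / lam) * (β / 2) * ‖z - w‖ ^ 2 := by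
  have hdescent := le_add_inner_add_half_mul_sq_norm_sub hgrad hglip z w
  have hcs : ⟪g w, z - w⟫_ℝ ≤ ‖g w‖ * ‖z - w‖ := real_inner_le_norm _ _
  have hgrad_sq : lam * ‖g w‖ ^ 2 / (2 * β) ≤ lam * r w := by
    rw [div_le_iff₀ (by positivity)]
    nlinarith [sq_norm_le_two_mul_mul_of_nonneg hβ hr0 hgrad hglip w]
  -- Young's inequality with weights `lam / β` and `β / lam`
  have hyoung : 0 ≤ (lam * ‖g w‖ - β * ‖z - w‖) ^ 2 / (2 * lam * β) := by positivity
  have hexpand : (lam * ‖g w‖ - β * ‖z - w‖) ^ 2 / (2 * lam * β)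
      = lam * ‖g w‖ ^ 2 / (2 * β) - ‖g w‖ * ‖z - w‖ + β / (2 * lam) * ‖z - w‖ ^ 2 := by
    field_simp
    ring
  have hsplit : (1 + 1 / lam) * (β / 2) * ‖z - w‖ ^ 2
      = β / 2 * ‖z - w‖ ^ 2 + β / (2 * lam) * ‖z - w‖ ^ 2 := by
    field_simp
  linarith

end Smooth

theorem norm_equiv_symm_sub_of_snd_eq {E F : Type*} [NormedAddCommGroup E] [NormedAddCommGroup F]
    (x x' : E) (u : F) :
    ‖(WithLp.equiv 2 (E × F)).symm (x, u) - (WithLp.equiv 2 (E × F)).symm (x', u)‖ = ‖x - x'‖ := by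
  simp [WithLp.prod_norm_eq_of_L2]

theorem stmt1_general {E F : Type*}
    [NormedAddCommGroup E] [InnerProductSpace ℝ E] [CompleteSpace E]
    [NormedAddCommGroup F] [InnerProductSpace ℝ F] [CompleteSpace F]
    (r : WithLp 2 (E × F) → ℝ) (g : WithLp 2 (E × F) → WithLp 2 (E × F))
    (f : E → F → E) (β σx lam q q' R Rdag : ℝ) (x xdag : E) (udag : F)
    (hβ : 0 < β)
    (hr0 : ∀ z, 0 ≤ r z)
    (hgrad : ∀ z, HasGradientAt r (g z) z)
    (hglip : ∀ z w, ‖g z - g w‖ ≤ β * ‖z - w‖)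
    (hf : ∀ (a a' : E) (b : F), ‖f a b - f a' b‖ ≤ σx * ‖a - a'‖)
    (hlam : 0 < lam) (hq' : 0 ≤ q')
    (hqq : σx ^ 2 * q' + (1 + 1 / lam) * (β / 2) ≤ q)
    (hinv : R + q * ‖x - xdag‖ ^ 2 ≤ (1 + lam) * Rdag) :
    R + r ((WithLp.equiv 2 (E × F)).symm (x, udag))
        + q' * ‖f x udag - f xdag udag‖ ^ 2
      ≤ (1 + lam) * (Rdag + r ((WithLp.equiv 2 (E × F)).symm (xdag, udag))) := by
  have hr := le_one_add_mul_add_mul_sq_norm_sub hβ hlam hr0 hgrad hglip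
    ((WithLp.equiv 2 (E × F)).symm (x, udag)) ((WithLp.equiv 2 (E × F)).symm (xdag, udag))
  rw [norm_equiv_symm_sub_of_snd_eq] at hr
  have hf_sq : ‖f x udag - f xdag udag‖ ^ 2 ≤ σx ^ 2 * ‖x - xdag‖ ^ 2 := by
    rw [← mul_pow]
    exact pow_le_pow_left₀ (norm_nonneg _) (hf x xdag udag) 2
  have hq_sq := mul_le_mul_of_nonneg_right hqq (sq_nonneg ‖x - xdag‖)
  linarith [mul_le_mul_of_nonneg_left hf_sq hq']

/-- induction step of Proposition 4.2.
If the reservation-augmented invariant holds at the current round, the prior action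
`u†` remains feasible for the reservation-augmented safe set at the next round. -/
theorem stmt1 {E F : Type*}
    [NormedAddCommGroup E] [InnerProductSpace ℝ E] [CompleteSpace E]
    [NormedAddCommGroup F] [InnerProductSpace ℝ F] [CompleteSpace F]
    (r : WithLp 2 (E × F) → ℝ) (g : WithLp 2 (E × F) → WithLp 2 (E × F))
    (f : E → F → E) (β σx lam q q' R Rdag : ℝ) (x xdag : E) (udag : F)
    (hβ : 0 < β)
    (hr0 : ∀ z, 0 ≤ r z)
    (hconv : ConvexOn ℝ Set.univ r)
    (hgrad : ∀ z, HasGradientAt r (g z) z)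
    (hglip : ∀ z w, ‖g z - g w‖ ≤ β * ‖z - w‖)
    (hσx : 0 ≤ σx)
    (hf : ∀ (a a' : E) (b : F), ‖f a b - f a' b‖ ≤ σx * ‖a - a'‖)
    (hlam : 0 < lam) (hq : 0 ≤ q) (hq' : 0 ≤ q')
    (hqq : σx ^ 2 * q' + (1 + 1 / lam) * (β / 2) ≤ q)
    (hinv : R + q * ‖x - xdag‖ ^ 2 ≤ (1 + lam) * Rdag) :
    R + r ((WithLp.equiv 2 (E × F)).symm (x, udag))
        + q' * ‖f x udag - f xdag udag‖ ^ 2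
      ≤ (1 + lam) * (Rdag + r ((WithLp.equiv 2 (E × F)).symm (xdag, udag))) :=
  stmt1_general r g f β σx lam q q' R Rdag x xdag udag hβ hr0 hgrad hglip hf hlam hq' hqq hinv
end

section
/- Fix a horizon H ≥ 1, real Hilbert spaces E and F with E × F carrying the ℓ² product inner product, β > 0, λ > 0, σₓ ≥ 0, and constants C₁ ≥ 1, C₂ ≥ 1. For h = 0, …, H−1, let r_h : E × F → ℝ be nonnegative, convex, and β-smooth, let f_h : E × F → E satisfy ‖f_h(x,u) − f_h(x',u)‖ ≤ σₓ·‖x − x'‖ for all x, x', u, and define the reservation coefficients q_h = C₁·(1 + 1/λ)·(β/2)·Σ_{i=0}^{H−h−1} (C₂·σₓ²)^i. Given actions u_0, …, u_{H−1} ∈ F and prior actions u†_0, …, u†_{H−1} ∈ F, define states by x_0 = x†_0, x_{h+1} = f_h(x_h, u_h), x†_{h+1} = f_h(x†_h, u†_h). Say that an action u satisfies the round-h safety constraint if Σ_{i=0}^{h−1} r_i(x_i, u_i) + r_h(x_h, u) + q_h·‖f_h(x_h, u) − f_h(x†_h, u†_h)‖² ≤ (1+λ)·Σ_{i=0}^{h}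 r_i(x†_i, u†_i). Then for every h ∈ {0, …, H−1}: if each u_i for i < h satisfies the round-i safety constraint, the prior action u†_h satisfies the round-h safety constraint; in particular the round-h safe action set is nonempty. (Proposition 4.2.) -/
/-!
A nonnegative function `r` with `β`-Lipschitz gradient satisfies `‖∇r w‖² ≤ 2β r w` (take one
gradient step from `w` and use the descent lemma together with `r ≥ 0`). Combined with the descent
lemma and Young's inequality this gives
`r z ≤ (1 + λ) r w + (1 + 1/λ) (β/2) ‖z - w‖²`.
At round `h + 1` the constraint met by `u h` already pays `q h ‖x (h+1) - x† (h+1)‖²`; switching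
the current action to `u† (h+1)` costs `λ r_{h+1}(x†, u†) + (1 + 1/λ)(β/2) ‖x - x†‖²`, the new
reservation term costs at most `q (h+1) σₓ² ‖x - x†‖²`, and the geometric sums defining `q` make
`(1 + 1/λ)(β/2) + q (h+1) σₓ² ≤ q h` as soon as `C₁, C₂ ≥ 1`.
-/

open Set Finset
open scoped RealInnerProductSpace

theorem image_le_add_fderiv_add_half_mul_sq {E : Type*} [NormedAddCommGroup E] [NormedSpace ℝ E]
    {f : E → ℝ} {f' : E → E →L[ℝ] ℝ} {β : ℝ} (hf : ∀ x, HasFDerivAt f (f' x) x)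
    (hf' : ∀ x y, ‖f' x - f' y‖ ≤ β * ‖x - y‖) (x y : E) :
    f y ≤ f x + f' x (y - x) + β / 2 * ‖y - x‖ ^ 2 := by
  set v := y - x
  set ψ : ℝ → ℝ := fun t => f x + t * f' x v + β / 2 * t ^ 2 * ‖v‖ ^ 2 - f (x + t • v)
  have hψ : ∀ t, HasDerivAt ψ (f' x v + β * t * ‖v‖ ^ 2 - f' (x + t • v) v) t := by
    intro t
    have hline : HasDerivAt (fun s : ℝ => x + s • v) v t := by
      simpa using ((hasDerivAt_id t).smul_const v).const_add x
    have := (((hasDerivAt_id t).mul_const (f' x v)).const_add (f x)).add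
      (((hasDerivAt_pow 2 t).const_mul (β / 2)).mul_const (‖v‖ ^ 2)) |>.sub
      ((hf _).comp_hasDerivAt t hline)
    exact this.congr_deriv (by ring)
  have hψ' : ∀ t ∈ interior (Ici (0 : ℝ)), 0 ≤ f' x v + β * t * ‖v‖ ^ 2 - f' (x + t • v) v := by
    intro t ht
    rw [interior_Ici] at ht
    have hlip : ‖f' (x + t • v) - f' x‖ ≤ β * (t * ‖v‖) := by
      simpa [norm_smul, abs_of_pos (mem_Ioi.1 ht)] using hf' (x + t • v) x
    have hvar : f' (x + t • v) v - f' x v ≤ β * t * ‖v‖ ^ 2 :=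
      calc f' (x + t • v) v - f' x v = (f' (x + t • v) - f' x) v := rfl
        _ ≤ ‖(f' (x + t • v) - f' x) v‖ := Real.le_norm_self _
        _ ≤ ‖f' (x + t • v) - f' x‖ * ‖v‖ := ContinuousLinearMap.le_opNorm _ _
        _ ≤ β * (t * ‖v‖) * ‖v‖ := by gcongr
        _ = β * t * ‖v‖ ^ 2 := by ring
    linarith
  have hmono := monotoneOn_of_hasDerivWithinAt_nonneg (convex_Ici 0)
    (fun t _ => (hψ t).continuousAt.continuousWithinAt) (fun t _ => (hψ t).hasDerivWithinAt) hψ'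
  have := hmono (mem_Ici.2 le_rfl) (mem_Ici.2 zero_le_one) zero_le_one
  have hxy : x + v = y := add_sub_cancel x y
  simpa [ψ, hxy] using this

section Gradient

variable {E : Type*} [NormedAddCommGroup E] [InnerProductSpace ℝ E] [CompleteSpace E]
  {r : E → ℝ} {g : E → E} {β : ℝ}

theorem image_le_add_inner_add_half_mul_sq (hgrad : ∀ z, HasGradientAt r (g z) z)
    (hglip : ∀ z w, ‖g z - g w‖ ≤ β * ‖z - w‖) (w z : E) :
    r z ≤ r w + ⟪g w, z - w⟫ + β / 2 * ‖z - w‖ ^ 2 :=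
  image_le_add_fderiv_add_half_mul_sq (fun z => (hgrad z).hasFDerivAt)
    (fun z w => by simpa only [← map_sub, LinearIsometryEquiv.norm_map] using hglip z w) w z

theorem sq_norm_gradient_le_of_nonneg (hβ : 0 < β) (hr0 : ∀ z, 0 ≤ r z)
    (hgrad : ∀ z, HasGradientAt r (g z) z) (hglip : ∀ z w, ‖g z - g w‖ ≤ β * ‖z - w‖) (w : E) :
    ‖g w‖ ^ 2 ≤ 2 * β * r w := by
  have hstep := image_le_add_inner_add_half_mul_sq hgrad hglip w (w - β⁻¹ • g w)
  rw [sub_sub_cancel_left, inner_neg_right, real_inner_smul_right, real_inner_self_eq_norm_sq,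
    norm_neg, norm_smul, Real.norm_of_nonneg (inv_nonneg.2 hβ.le)] at hstep
  have hdescent : r (w - β⁻¹ • g w) ≤ r w - ‖g w‖ ^ 2 / (2 * β) := by
    convert hstep using 1
    field_simp
    ring
  have := (hr0 _).trans hdescent
  rw [sub_nonneg, div_le_iff₀ (by positivity)] at this
  linarith

theorem image_le_one_add_mul_add_mul_sq (hβ : 0 < β) {lam : ℝ} (hlam : 0 < lam)
    (hr0 : ∀ z, 0 ≤ r z) (hgrad : ∀ z, HasGradientAt r (g z) z)
    (hglip : ∀ z w, ‖g z - g w‖ ≤ β * ‖z - w‖) (w z : E) :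
    r z ≤ (1 + lam) * r w + (1 + 1 / lam) * (β / 2) * ‖z - w‖ ^ 2 := by
  have hdesc := image_le_add_inner_add_half_mul_sq hgrad hglip w z
  have hgw := sq_norm_gradient_le_of_nonneg hβ hr0 hgrad hglip w
  have hcs := real_inner_le_norm (g w) (z - w)
  have hyoung : ‖g w‖ * ‖z - w‖ ≤ lam / (2 * β) * ‖g w‖ ^ 2 + β / (2 * lam) * ‖z - w‖ ^ 2 := by
    have key : lam / (2 * β) * ‖g w‖ ^ 2 + β / (2 * lam) * ‖z - w‖ ^ 2 - ‖g w‖ * ‖z - w‖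
        = (lam * ‖g w‖ - β * ‖z - w‖) ^ 2 / (2 * β * lam) := by
      field_simp
      ring
    rw [← sub_nonneg, key]
    positivity
  have hgw' : lam / (2 * β) * ‖g w‖ ^ 2 ≤ lam * r w := by
    calc lam / (2 * β) * ‖g w‖ ^ 2 ≤ lam / (2 * β) * (2 * β * r w) := by gcongr
      _ = lam * r w := by field_simp
  have hcoef : (1 + 1 / lam) * (β / 2) = β / 2 + β / (2 * lam) := by field_simp
  rw [hcoef]
  linarith

end Gradient

theorem add_mul_geom_sum_le_geom_sum_succ {C₁ C₂ K s : ℝ} (hC₁ : 1 ≤ C₁) (hC₂ : 1 ≤ C₂)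
    (hK : 0 ≤ K) (hs : 0 ≤ s) (n : ℕ) :
    K + C₁ * K * (∑ i ∈ range n, (C₂ * s) ^ i) * s ≤
      C₁ * K * ∑ i ∈ range (n + 1), (C₂ * s) ^ i := by
  have hS : 0 ≤ ∑ i ∈ range n, (C₂ * s) ^ i := sum_nonneg fun i _ => by positivity
  have hK₁ : K ≤ C₁ * K := le_mul_of_one_le_left hK hC₁
  have hs₂ : s ≤ C₂ * s := le_mul_of_one_le_left hs hC₂
  rw [geom_sum_succ]
  nlinarith [mul_le_mul_of_nonneg_left hs₂ (mul_nonneg (hK.trans hK₁) hS)]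

noncomputable def pairL2 {E F : Type*} [NormedAddCommGroup E] [NormedAddCommGroup F]
    (x : E) (u : F) : WithLp 2 (E × F) := (WithLp.equiv 2 (E × F)).symm (x, u)

theorem norm_pairL2_sub_pairL2 {E F : Type*} [NormedAddCommGroup E] [NormedAddCommGroup F]
    (x x' : E) (u : F) : ‖pairL2 x u - pairL2 x' u‖ = ‖x - x'‖ := by
  rw [pairL2, pairL2, WithLp.equiv_symm_apply, ← WithLp.toLp_sub, Prod.mk_sub_mk, sub_self]
  exact WithLp.norm_toLp_fst 2 E F (x - x')

theorem stmt2_general {E F : Type*}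
    [NormedAddCommGroup E] [InnerProductSpace ℝ E] [CompleteSpace E]
    [NormedAddCommGroup F] [InnerProductSpace ℝ F] [CompleteSpace F]
    (H : ℕ)
    (β lam σx C₁ C₂ : ℝ)
    (hβ : 0 < β) (hlam : 0 < lam) (hC₁ : 1 ≤ C₁) (hC₂ : 1 ≤ C₂)
    (r : ℕ → WithLp 2 (E × F) → ℝ) (g : ℕ → WithLp 2 (E × F) → WithLp 2 (E × F))
    (f : ℕ → E → F → E)
    (hr0 : ∀ h < H, ∀ z, 0 ≤ r h z)
    (hgrad : ∀ h < H, ∀ z, HasGradientAt (r h) (g h z) z)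
    (hglip : ∀ h < H, ∀ z w, ‖g h z - g h w‖ ≤ β * ‖z - w‖)
    (hf : ∀ h < H, ∀ (a a' : E) (b : F), ‖f h a b - f h a' b‖ ≤ σx * ‖a - a'‖)
    (q : ℕ → ℝ)
    (hqdef : ∀ h,
      q h = C₁ * (1 + 1 / lam) * (β / 2) * ∑ i ∈ Finset.range (H - h), (C₂ * σx ^ 2) ^ i)
    (u udag : ℕ → F) (x xdag : ℕ → E)
    (hx0 : x 0 = xdag 0)
    (hxrec : ∀ h, x (h + 1) = f h (x h) (u h))
    (hxdagrec : ∀ h, xdag (h + 1) = f h (xdag h) (udag h)) :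
    ∀ h < H,
      (∀ i < h,
        (∑ j ∈ Finset.range i, r j (pairL2 (x j) (u j))) + r i (pairL2 (x i) (u i))
            + q i * ‖f i (x i) (u i) - f i (xdag i) (udag i)‖ ^ 2
          ≤ (1 + lam) * ∑ j ∈ Finset.range (i + 1), r j (pairL2 (xdag j) (udag j))) →
      (∑ j ∈ Finset.range h, r j (pairL2 (x j) (u j))) + r h (pairL2 (x h) (udag h))
          + q h * ‖f h (x h) (udag h) - f h (xdag h) (udag h)‖ ^ 2
        ≤ (1 + lam) * ∑ j ∈ Finset.range (h + 1), r j (pairL2 (xdag j) (udag j)) := by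
  intro h hh hprev
  cases h with
  | zero =>
    have hcost := hr0 0 hh (pairL2 (xdag 0) (udag 0))
    simpa [hx0] using le_mul_of_one_le_left hcost (by linarith : 1 ≤ 1 + lam)
  | succ k =>
    set D := ‖x (k + 1) - xdag (k + 1)‖
    have hround := hprev k k.lt_succ_self
    rw [← hxrec, ← hxdagrec] at hround
    have hswap := image_le_one_add_mul_add_mul_sq hβ hlam (hr0 _ hh) (hgrad _ hh) (hglip _ hh)
      (pairL2 (xdag (k + 1)) (udag (k + 1))) (pairL2 (x (k + 1)) (udag (k + 1)))
    rw [norm_pairL2_sub_pairL2] at hswap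
    have hq₀ : 0 ≤ q (k + 1) := by
      rw [hqdef]
      have : 0 ≤ C₁ := by linarith
      have : 0 ≤ C₂ := by linarith
      positivity
    have hreserve : q (k + 1) * ‖f (k + 1) (x (k + 1)) (udag (k + 1))
        - f (k + 1) (xdag (k + 1)) (udag (k + 1))‖ ^ 2 ≤ q (k + 1) * σx ^ 2 * D ^ 2 := by
      rw [mul_assoc, ← mul_pow]
      gcongr
      exact hf _ hh _ _ _
    have hq : (1 + 1 / lam) * (β / 2) + q (k + 1) * σx ^ 2 ≤ q k := by
      have := add_mul_geom_sum_le_geom_sum_succ hC₁ hC₂ (K := (1 + 1 / lam) * (β / 2))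
        (by positivity) (sq_nonneg σx) (H - (k + 1))
      rw [hqdef, hqdef, show H - k = H - (k + 1) + 1 by omega]
      linarith
    rw [sum_range_succ _ k, sum_range_succ _ (k + 1)]
    linarith [mul_le_mul_of_nonneg_right hq (sq_nonneg D)]

/-- Proposition 4.2.
With the reservation coefficients `q h = C₁ (1 + 1/λ) (β/2) Σ_{i=0}^{H−h−1} (C₂ σₓ²)^i`,
if each previously chosen action satisfies its reservation-augmented safety constraint,
then the prior action `u† h` satisfies the round-`h` safety constraint; in particular
the round-`h` safe action set is nonempty. -/
theorem stmt2 {E F : Type*}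
    [NormedAddCommGroup E] [InnerProductSpace ℝ E] [CompleteSpace E]
    [NormedAddCommGroup F] [InnerProductSpace ℝ F] [CompleteSpace F]
    (H : ℕ) (hH : 1 ≤ H)
    (β lam σx C₁ C₂ : ℝ)
    (hβ : 0 < β) (hlam : 0 < lam) (hσx : 0 ≤ σx) (hC₁ : 1 ≤ C₁) (hC₂ : 1 ≤ C₂)
    (r : ℕ → WithLp 2 (E × F) → ℝ) (g : ℕ → WithLp 2 (E × F) → WithLp 2 (E × F))
    (f : ℕ → E → F → E)
    (hr0 : ∀ h < H, ∀ z, 0 ≤ r h z)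
    (hconv : ∀ h < H, ConvexOn ℝ Set.univ (r h))
    (hgrad : ∀ h < H, ∀ z, HasGradientAt (r h) (g h z) z)
    (hglip : ∀ h < H, ∀ z w, ‖g h z - g h w‖ ≤ β * ‖z - w‖)
    (hf : ∀ h < H, ∀ (a a' : E) (b : F), ‖f h a b - f h a' b‖ ≤ σx * ‖a - a'‖)
    (q : ℕ → ℝ)
    (hqdef : ∀ h,
      q h = C₁ * (1 + 1 / lam) * (β / 2) * ∑ i ∈ Finset.range (H - h), (C₂ * σx ^ 2) ^ i)
    (u udag : ℕ → F) (x xdag : ℕ → E)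
    (hx0 : x 0 = xdag 0)
    (hxrec : ∀ h, x (h + 1) = f h (x h) (u h))
    (hxdagrec : ∀ h, xdag (h + 1) = f h (xdag h) (udag h)) :
    ∀ h < H,
      (∀ i < h,
        (∑ j ∈ Finset.range i, r j (pairL2 (x j) (u j))) + r i (pairL2 (x i) (u i))
            + q i * ‖f i (x i) (u i) - f i (xdag i) (udag i)‖ ^ 2
          ≤ (1 + lam) * ∑ j ∈ Finset.range (i + 1), r j (pairL2 (xdag j) (udag j))) →
      (∑ j ∈ Finset.range h, r j (pairL2 (x j) (u j))) + r h (pairL2 (x h) (udag h))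
          + q h * ‖f h (x h) (udag h) - f h (xdag h) (udag h)‖ ^ 2
        ≤ (1 + lam) * ∑ j ∈ Finset.range (h + 1), r j (pairL2 (xdag j) (udag j)) :=
  stmt2_general H β lam σx C₁ C₂ hβ hlam hC₁ hC₂ r g f hr0 hgrad hglip hf q hqdef u udag x xdag hx0
    hxrec hxdagrec
end

section
/- Let E and F be real normed spaces, H ≥ 1, and let σₓ, σᵤ, L, L_c ≥ 0. For h = 0, …, H−1, let f_h : E × F → E satisfy ‖f_h(x,u) − f_h(x',u')‖ ≤ σₓ·‖x − x'‖ + σᵤ·‖u − u'‖ for all inputs, let c_h : E × F → ℝ satisfy |c_h(x,u) − c_h(x',u')| ≤ L_c·(‖x − x'‖ + ‖u − u'‖) for all inputs, and let π_h, π̃_h : E → F with each π̃_h L-Lipschitz. Define trajectories by x_0 = x̃_0 and x_{h+1} = f_h(x_h, π_h(x_h)), x̃_{h+1} = f_h(x̃_h, π̃_h(x̃_h)). Suppose there are nonnegative reals e_0, …, e_{H−1} such that ‖π_h(x_h) − π̃_h(x_h)‖ ≤ L·‖x_h − x̃_h‖ + e_h for every h. Then Σ_{h=0}^{H−1} c_h(x_h,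 π_h(x_h)) − Σ_{h=0}^{H−1} c_h(x̃_h, π̃_h(x̃_h)) ≤ B·Σ_{h=0}^{H−1} e_h, where B = L_c·(1 + (1 + 2L)·σᵤ·Σ_{j=0}^{H−1} (σₓ + 2·σᵤ·L)^j). (This is the deterministic, per-trajectory core of Theorem 4.4 bounding the cost of the safety-constrained policy against the pure ML policy.) -/
/-!
With `d h = ‖x h - xt h‖`, the triangle inequality through `πt h (x h)` bounds the control
gap by `2 L d h + e h`. Hence `d (h + 1) ≤ (σx + 2 σu L) d h + σu e h` with `d 0 = 0`, and
summing this recursion gives `∑ d h ≤ σu (∑ (σx + 2 σu L) ^ j) ∑ e h`. Each cost gap is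
at most `Lc ((1 + 2 L) d h + e h)`, and adding these up yields the bound.
-/

open Finset

/-- Discrete Grönwall inequality, summed over the horizon. -/
theorem sum_range_le_geom_sum_mul_of_le_mul_add {R : Type*}
    [CommRing R] [LinearOrder R] [IsStrictOrderedRing R] {d b : ℕ → R} {ρ : R} {n : ℕ}
    (hρ : 0 ≤ ρ) (hd₀ : d 0 ≤ 0)
    (hd : ∀ h < n, d (h + 1) ≤ ρ * d h + b h) (hb : ∀ h < n, 0 ≤ b h) :
    ∑ h ∈ range n, d h ≤ (∑ j ∈ range n, ρ ^ j) * ∑ h ∈ range n, b h := by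
  induction n with
  | zero => simp
  | succ n ih =>
    have ih := ih (fun h hh => hd h (by omega)) (fun h hh => hb h (by omega))
    have hshift :
        ∑ h ∈ range n, d (h + 1) ≤ ρ * ∑ h ∈ range n, d h + ∑ h ∈ range n, b h := by
      rw [mul_sum, ← sum_add_distrib]
      exact sum_le_sum fun h hh => hd h (Nat.lt_succ_of_lt (mem_range.mp hh))
    have hS : 0 ≤ ∑ j ∈ range (n + 1), ρ ^ j := sum_nonneg fun j _ => pow_nonneg hρ j
    calc ∑ h ∈ range (n + 1), d h
        = ∑ h ∈ range n, d (h + 1) + d 0 := sum_range_succ' d n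
      _ ≤ ρ * ((∑ j ∈ range n, ρ ^ j) * ∑ h ∈ range n, b h) + ∑ h ∈ range n, b h :=
        by linarith [mul_le_mul_of_nonneg_left ih hρ]
      _ = (∑ j ∈ range (n + 1), ρ ^ j) * ∑ h ∈ range n, b h := by rw [geom_sum_succ]; ring
      _ ≤ (∑ j ∈ range (n + 1), ρ ^ j) * ∑ h ∈ range (n + 1), b h := by
        refine mul_le_mul_of_nonneg_left ?_ hS
        rw [sum_range_succ _ n]
        linarith [hb n n.lt_succ_self]

theorem stmt4_general {E F : Type*} [NormedAddCommGroup E]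
    [NormedAddCommGroup F]
    (H : ℕ) (σx σu L Lc : ℝ)
    (hσx : 0 ≤ σx) (hσu : 0 ≤ σu) (hL : 0 ≤ L) (hLc : 0 ≤ Lc)
    (f : ℕ → E → F → E) (c : ℕ → E → F → ℝ) (π πt : ℕ → E → F)
    (hf : ∀ h < H, ∀ (a a' : E) (b b' : F),
      ‖f h a b - f h a' b'‖ ≤ σx * ‖a - a'‖ + σu * ‖b - b'‖)
    (hc : ∀ h < H, ∀ (a a' : E) (b b' : F),
      |c h a b - c h a' b'| ≤ Lc * (‖a - a'‖ + ‖b - b'‖))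
    (hπt : ∀ h < H, ∀ a b : E, ‖πt h a - πt h b‖ ≤ L * ‖a - b‖)
    (x xt : ℕ → E)
    (hx0 : x 0 = xt 0)
    (hxrec : ∀ h, x (h + 1) = f h (x h) (π h (x h)))
    (hxtrec : ∀ h, xt (h + 1) = f h (xt h) (πt h (xt h)))
    (e : ℕ → ℝ) (he : ∀ h < H, 0 ≤ e h)
    (hdev : ∀ h < H, ‖π h (x h) - πt h (x h)‖ ≤ L * ‖x h - xt h‖ + e h) :
    (∑ h ∈ Finset.range H, c h (x h) (π h (x h)))
        - ∑ h ∈ Finset.range H, c h (xt h) (πt h (xt h))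
      ≤ Lc * (1 + (1 + 2 * L) * σu * ∑ j ∈ Finset.range H, (σx + 2 * σu * L) ^ j)
          * ∑ h ∈ Finset.range H, e h := by
  have hctrl : ∀ h < H, ‖π h (x h) - πt h (xt h)‖ ≤ 2 * L * ‖x h - xt h‖ + e h :=
      fun h hh => by
    linarith [norm_sub_le_norm_sub_add_norm_sub (π h (x h)) (πt h (x h)) (πt h (xt h)),
      hdev h hh, hπt h hh (x h) (xt h)]
  have hstate : ∀ h < H, ‖x (h + 1) - xt (h + 1)‖
      ≤ (σx + 2 * σu * L) * ‖x h - xt h‖ + σu * e h := fun h hh => by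
    rw [hxrec, hxtrec]
    calc _ ≤ σx * ‖x h - xt h‖ + σu * ‖π h (x h) - πt h (xt h)‖ := hf h hh _ _ _ _
      _ ≤ σx * ‖x h - xt h‖ + σu * (2 * L * ‖x h - xt h‖ + e h) := by
        gcongr; exact hctrl h hh
      _ = _ := by ring
  have hcost : ∀ h < H, c h (x h) (π h (x h)) - c h (xt h) (πt h (xt h))
      ≤ Lc * (1 + 2 * L) * ‖x h - xt h‖ + Lc * e h := fun h hh => by
    calc _ ≤ Lc * (‖x h - xt h‖ + ‖π h (x h) - πt h (xt h)‖) :=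
          (le_abs_self _).trans (hc h hh _ _ _ _)
      _ ≤ Lc * (‖x h - xt h‖ + (2 * L * ‖x h - xt h‖ + e h)) := by
        gcongr; exact hctrl h hh
      _ = _ := by ring
  have hstates : ∑ h ∈ range H, ‖x h - xt h‖
      ≤ (∑ j ∈ range H, (σx + 2 * σu * L) ^ j) * ∑ h ∈ range H, σu * e h :=
    sum_range_le_geom_sum_mul_of_le_mul_add (by positivity) (by simp [hx0]) hstate
      fun h hh => mul_nonneg hσu (he h hh)
  calc _ = ∑ h ∈ range H, (c h (x h) (π h (x h)) - c h (xt h) (πt h (xt h))) :=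
        (sum_sub_distrib _ _).symm
    _ ≤ ∑ h ∈ range H, (Lc * (1 + 2 * L) * ‖x h - xt h‖ + Lc * e h) :=
        sum_le_sum fun h hh => hcost h (mem_range.mp hh)
    _ = Lc * (1 + 2 * L) * ∑ h ∈ range H, ‖x h - xt h‖ + Lc * ∑ h ∈ range H, e h := by
        rw [sum_add_distrib, mul_sum, mul_sum]
    _ ≤ _ := by
        have hweighted := mul_le_mul_of_nonneg_left hstates (by positivity : 0 ≤ Lc * (1 + 2 * L))
        rw [← mul_sum] at hweighted
        linarith

/-- deterministic, per-trajectory core of Theorem 4.4.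
The cost of the safety-constrained policy exceeds the cost of the pure ML policy
by at most `B · Σ e_h`. -/
theorem stmt4 {E F : Type*} [NormedAddCommGroup E] [NormedSpace ℝ E]
    [NormedAddCommGroup F] [NormedSpace ℝ F]
    (H : ℕ) (hH : 1 ≤ H) (σx σu L Lc : ℝ)
    (hσx : 0 ≤ σx) (hσu : 0 ≤ σu) (hL : 0 ≤ L) (hLc : 0 ≤ Lc)
    (f : ℕ → E → F → E) (c : ℕ → E → F → ℝ) (π πt : ℕ → E → F)
    (hf : ∀ h < H, ∀ (a a' : E) (b b' : F),
      ‖f h a b - f h a' b'‖ ≤ σx * ‖a - a'‖ + σu * ‖b - b'‖)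
    (hc : ∀ h < H, ∀ (a a' : E) (b b' : F),
      |c h a b - c h a' b'| ≤ Lc * (‖a - a'‖ + ‖b - b'‖))
    (hπt : ∀ h < H, ∀ a b : E, ‖πt h a - πt h b‖ ≤ L * ‖a - b‖)
    (x xt : ℕ → E)
    (hx0 : x 0 = xt 0)
    (hxrec : ∀ h, x (h + 1) = f h (x h) (π h (x h)))
    (hxtrec : ∀ h, xt (h + 1) = f h (xt h) (πt h (xt h)))
    (e : ℕ → ℝ) (he : ∀ h < H, 0 ≤ e h)
    (hdev : ∀ h < H, ‖π h (x h) - πt h (x h)‖ ≤ L * ‖x h - xt h‖ + e h) :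
    (∑ h ∈ Finset.range H, c h (x h) (π h (x h)))
        - ∑ h ∈ Finset.range H, c h (xt h) (πt h (xt h))
      ≤ Lc * (1 + (1 + 2 * L) * σu * ∑ j ∈ Finset.range H, (σx + 2 * σu * L) ^ j)
          * ∑ h ∈ Finset.range H, e h :=
  stmt4_general H σx σu L Lc hσx hσu hL hLc f c π πt hf hc hπt x xt hx0 hxrec hxtrec e he hdev
end

section
/- Let E and F be real normed spaces, H ≥ 1, and σₓ, σᵤ, L ≥ 0. For h = 0, …, H−1, let f_h : E × F → E satisfy ‖f_h(x,u) − f_h(x',u')‖ ≤ σₓ·‖x − x'‖ + σᵤ·‖u − u'‖ for all inputs, and let π_h, π̃_h : E → F with each π̃_h L-Lipschitz. Define trajectories by x_0 = x̃_0, x_{h+1} = f_h(x_h, π_h(x_h)), and x̃_{h+1} = f_h(x̃_h, π̃_h(x̃_h)). Suppose there are nonnegative reals e_0, …, e_{H−1} such that ‖π_h(x_h) − π̃_h(x_h)‖ ≤ L·‖x_h − x̃_h‖ + e_h for every h ∈ {0, …, H−1}. Then for every h ∈ {0, …, H}: ‖x̃_h − x_h‖ ≤ σᵤ·Σ_{i=0}^{h−1}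 (σₓ + 2·σᵤ·L)^{h−1−i}·e_i. (Lemma D.3: bound on the state divergence between the safety-constrained trajectory and the pure-ML trajectory.) -/
/-- Lemma D.3.
Bound on the state divergence between the safety-constrained trajectory and the
pure-ML trajectory. -/
theorem stmt13 {E F : Type*} [NormedAddCommGroup E] [NormedSpace ℝ E]
    [NormedAddCommGroup F] [NormedSpace ℝ F]
    (H : ℕ) (hH : 1 ≤ H) (σx σu L : ℝ)
    (hσx : 0 ≤ σx) (hσu : 0 ≤ σu) (hL : 0 ≤ L)
    (f : ℕ → E → F → E) (π πt : ℕ → E → F)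
    (hf : ∀ h < H, ∀ (a a' : E) (b b' : F),
      ‖f h a b - f h a' b'‖ ≤ σx * ‖a - a'‖ + σu * ‖b - b'‖)
    (hπt : ∀ h < H, ∀ a b : E, ‖πt h a - πt h b‖ ≤ L * ‖a - b‖)
    (x xt : ℕ → E)
    (hx0 : x 0 = xt 0)
    (hxrec : ∀ h, x (h + 1) = f h (x h) (π h (x h)))
    (hxtrec : ∀ h, xt (h + 1) = f h (xt h) (πt h (xt h)))
    (e : ℕ → ℝ) (he : ∀ h < H, 0 ≤ e h)
    (hdev : ∀ h < H, ‖π h (x h) - πt h (x h)‖ ≤ L * ‖x h - xt h‖ + e h) :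
    ∀ h ≤ H, ‖xt h - x h‖
      ≤ σu * ∑ i ∈ Finset.range h, (σx + 2 * σu * L) ^ (h - 1 - i) * e i := by
  intro h
  induction h with
  | zero =>
    intro _
    simp [hx0]
  | succ n ih =>
    intro hn1
    have hnH : n < H := hn1
    have hnH' : n ≤ H := le_of_lt hnH
    have ihn := ih hnH'
    set K : ℝ := σx + 2 * σu * L with hKdef
    have hK : 0 ≤ K := by positivity
    have step : ‖xt (n + 1) - x (n + 1)‖ ≤ K * ‖xt n - x n‖ + σu * e n := by
      rw [hxrec, hxtrec]
      calc ‖f n (xt n) (πt n (xt n)) - f n (x n) (π n (x n))‖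
          ≤ σx * ‖xt n - x n‖ + σu * ‖πt n (xt n) - π n (x n)‖ :=
            hf n hnH _ _ _ _
        _ ≤ σx * ‖xt n - x n‖ +
            σu * (‖πt n (xt n) - πt n (x n)‖ + ‖πt n (x n) - π n (x n)‖) := by
            gcongr
            exact norm_sub_le_norm_sub_add_norm_sub _ _ _
        _ ≤ σx * ‖xt n - x n‖ +
            σu * (L * ‖xt n - x n‖ + (L * ‖x n - xt n‖ + e n)) := by
            gcongr
            · exact hπt n hnH _ _
            · rw [norm_sub_rev]
              exact hdev n hnH
        _ = K * ‖xt n - x n‖ + σu * e n := by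
            rw [norm_sub_rev (x n)]
            ring
    have hsum : σu * ∑ i ∈ Finset.range (n + 1), K ^ (n + 1 - 1 - i) * e i
        = K * (σu * ∑ i ∈ Finset.range n, K ^ (n - 1 - i) * e i) + σu * e n := by
      rw [Finset.sum_range_succ]
      have : ∀ i ∈ Finset.range n, K ^ (n + 1 - 1 - i) * e i
          = K * (K ^ (n - 1 - i) * e i) := by
        intro i hi
        rw [Finset.mem_range] at hi
        have : n + 1 - 1 - i = (n - 1 - i) + 1 := by omega
        rw [this, pow_succ]
        ring
      rw [Finset.sum_congr rfl this]
      simp only [Nat.add_sub_cancel, Nat.sub_self, pow_zero, one_mul]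
      rw [mul_add]
      congr 1
      rw [Finset.mul_sum, Finset.mul_sum, Finset.mul_sum]
      exact Finset.sum_congr rfl fun i _ => by ring
    rw [hsum]
    have := mul_le_mul_of_nonneg_left ihn hK
    calc ‖xt (n + 1) - x (n + 1)‖ ≤ K * ‖xt n - x n‖ + σu * e n := step
      _ ≤ K * (σu * ∑ i ∈ Finset.range n, K ^ (n - 1 - i) * e i) + σu * e n := by
          gcongr
end
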